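/- The second GKZ operator of V_{(2,29)} lies in the left ideal generated by the Picard–Fuchs operators: for every smooth function f of two variables, δ2^3 f + z2·((3δ1+3δ2+1)(3δ1+3δ2+2)(3δ1+3δ2+3) f) = (δ1+δ2)(P2 f) − P1 f, where P1 = δ1^3 + z1(3δ1+3δ2+1)(3δ1+3δ2+2)(3δ1+3δ2+3) and P2 = (δ1^2 − δ1δ2 + δ2^2) + 3(z1+z2)(3δ1+3δ2+1)(3δ1+3δ2+2). Hence the GKZ ideal is contained in the ideal generated by P1 and P2, so the Picard–Fuchs module is a quotient of the GKZ module. -/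

import Mathlib

/-- The logarithmic derivative `δ1 = z1 ∂/∂z1`. -/
noncomputable def del1 (f : ℂ × ℂ → ℂ) : ℂ × ℂ → ℂ :=
  fun p => p.1 * fderiv ℂ f p (1, 0)

/-- The logarithmic derivative `δ2 = z2 ∂/∂z2`. -/
noncomputable def del2 (f : ℂ × ℂ → ℂ) : ℂ × ℂ → ℂ :=
  fun p => p.2 * fderiv ℂ f p (0, 1)

/-- The first-order operator `3δ1 + 3δ2 + c`. -/
noncomputable def Mop (c : ℂ) (f : ℂ × ℂ → ℂ) : ℂ × ℂ → ℂ :=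
  fun p => 3 * del1 f p + 3 * del2 f p + c * f p

/-- The first (unrescaled) Picard-Fuchs operator of `V_{(2,29)}`:
`P1 = δ1^3 + z1 (3δ1+3δ2+1)(3δ1+3δ2+2)(3δ1+3δ2+3)`. -/
noncomputable def P1op (f : ℂ × ℂ → ℂ) : ℂ × ℂ → ℂ :=
  fun p => del1 (del1 (del1 f)) p + p.1 * Mop 1 (Mop 2 (Mop 3 f)) p

/-- The second (unrescaled) Picard-Fuchs operator of `V_{(2,29)}`:
`P2 = (δ1^2 - δ1 δ2 + δ2^2) + 3(z1+z2)(3δ1+3δ2+1)(3δ1+3δ2+2)`. -/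
noncomputable def P2op (f : ℂ × ℂ → ℂ) : ℂ × ℂ → ℂ :=
  fun p => (del1 (del1 f) p - del1 (del2 f) p + del2 (del2 f) p)
    + 3 * (p.1 + p.2) * Mop 1 (Mop 2 f) p

/-- The second GKZ operator of `V_{(2,29)}`:
`δ2^3 + z2 (3δ1+3δ2+1)(3δ1+3δ2+2)(3δ1+3δ2+3)`. -/
noncomputable def GKZ2op (f : ℂ × ℂ → ℂ) : ℂ × ℂ → ℂ :=
  fun p => del2 (del2 (del2 f)) p + p.2 * Mop 1 (Mop 2 (Mop 3 f)) p

/-!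
Write `θ = δ1 + δ2`, so that `3δ1 + 3δ2 + c = 3θ + c`. Since `δ1` and `δ2` commute,
`θ (δ1² - δ1δ2 + δ2²) = δ1³ + δ2³`. Since `z1 + z2` is homogeneous of degree one,
`θ ((z1 + z2) g) = (z1 + z2)(1 + θ) g`, so `θ` applied to the second summand of `P2` gives
`(z1 + z2)(3θ + 3)(3θ + 1)(3θ + 2)`. The factors `3θ + c` are polynomials in the single operator
`θ` and hence commute, so subtracting `P1` leaves exactly `δ2³ + z2 (3θ + 1)(3θ + 2)(3θ + 3)`.
-/

noncomputable def euler (f : ℂ × ℂ → ℂ) : ℂ × ℂ → ℂ :=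
  fun p => del1 f p + del2 f p

section

variable {f g u : ℂ × ℂ → ℂ} {p : ℂ × ℂ}

open ContinuousLinearMap

theorem ContDiff.del1 (hf : ContDiff ℂ ⊤ f) : ContDiff ℂ ⊤ (del1 f) :=
  contDiff_fst.mul ((hf.fderiv_right le_rfl).clm_apply contDiff_const)

theorem ContDiff.del2 (hf : ContDiff ℂ ⊤ f) : ContDiff ℂ ⊤ (del2 f) :=
  contDiff_snd.mul ((hf.fderiv_right le_rfl).clm_apply contDiff_const)

theorem ContDiff.euler (hf : ContDiff ℂ ⊤ f) : ContDiff ℂ ⊤ (euler f) :=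
  hf.del1.add hf.del2

theorem ContDiff.Mop (c : ℂ) (hf : ContDiff ℂ ⊤ f) : ContDiff ℂ ⊤ (Mop c f) :=
  ((contDiff_const.mul hf.del1).add (contDiff_const.mul hf.del2)).add (contDiff_const.mul hf)

theorem Mop_apply (c : ℂ) (f : ℂ × ℂ → ℂ) (p : ℂ × ℂ) :
    Mop c f p = 3 * euler f p + c * f p := by
  simp only [Mop, euler]
  ring

theorem del1_del2_comm (hf : ContDiff ℂ 2 f) : del1 (del2 f) = del2 (del1 f) := by
  funext p
  have hD : DifferentiableAt ℂ (fderiv ℂ f) p :=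
    (hf.fderiv_right (m := 1) le_rfl).differentiable one_ne_zero p
  have hDv (v : ℂ × ℂ) : DifferentiableAt ℂ (fun q => fderiv ℂ f q v) p :=
    hD.clm_apply (differentiableAt_const v)
  have hD2 (v w : ℂ × ℂ) :
      fderiv ℂ (fun q => fderiv ℂ f q v) p w = fderiv ℂ (fderiv ℂ f) p w v := by
    simp [fderiv_clm_apply hD (differentiableAt_const v)]
  unfold del1 del2
  rw [fderiv_fun_mul differentiableAt_snd (hDv _), fderiv_fun_mul differentiableAt_fst (hDv _)]
  simp only [fderiv_fst, fderiv_snd, add_apply, smul_apply, smul_eq_mul, coe_fst', coe_snd', hD2,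
    hf.contDiffAt.isSymmSndFDerivAt (by simp) (1, 0) (0, 1)]
  ring

theorem euler_add (hf : DifferentiableAt ℂ f p) (hg : DifferentiableAt ℂ g p) :
    euler (fun q => f q + g q) p = euler f p + euler g p := by
  simp only [euler, del1, del2, fderiv_fun_add hf hg, add_apply]
  ring

theorem euler_sub (hf : DifferentiableAt ℂ f p) (hg : DifferentiableAt ℂ g p) :
    euler (fun q => f q - g q) p = euler f p - euler g p := by
  simp only [euler, del1, del2, fderiv_fun_sub hf hg, sub_apply]
  ring

theorem euler_const_mul (c : ℂ) (hf : DifferentiableAt ℂ f p) :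
    euler (fun q => c * f q) p = c * euler f p := by
  simp only [euler, del1, del2, fderiv_const_mul hf, smul_apply, smul_eq_mul]
  ring

theorem euler_mul (hu : DifferentiableAt ℂ u p) (hg : DifferentiableAt ℂ g p) :
    euler (fun q => u q * g q) p = euler u p * g p + u p * euler g p := by
  simp only [euler, del1, del2, fderiv_fun_mul hu hg, add_apply, smul_apply, smul_eq_mul]
  ring

theorem euler_three_mul_coord_sum :
    euler (fun q : ℂ × ℂ => 3 * (q.1 + q.2)) p = 3 * (p.1 + p.2) := by
  have h : HasFDerivAt (fun q : ℂ × ℂ => 3 * (q.1 + q.2))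
      ((3 : ℂ) • (fst ℂ ℂ ℂ + snd ℂ ℂ ℂ)) p :=
    (hasFDerivAt_fst.add hasFDerivAt_snd).const_mul (3 : ℂ)
  simp only [euler, del1, del2, h.fderiv, add_apply, smul_apply, coe_fst', coe_snd', smul_eq_mul]
  ring

theorem euler_Mop (c : ℂ) (hg : DifferentiableAt ℂ g p)
    (hθg : DifferentiableAt ℂ (euler g) p) :
    euler (Mop c g) p = 3 * euler (euler g) p + c * euler g p := by
  rw [show Mop c g = fun q => 3 * euler g q + c * g q from funext (Mop_apply c g),
    euler_add (hθg.const_mul 3) (hg.const_mul c), euler_const_mul 3 hθg, euler_const_mul c hg]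

theorem Mop_comm (c d : ℂ) (hg : Differentiable ℂ g) (hθg : Differentiable ℂ (euler g)) :
    Mop c (Mop d g) = Mop d (Mop c g) := by
  funext p
  rw [Mop_apply c (Mop d g), Mop_apply d (Mop c g), euler_Mop d (hg p) (hθg p),
    euler_Mop c (hg p) (hθg p), Mop_apply c g, Mop_apply d g]
  ring

theorem euler_three_mul_coord_sum_mul (hg : DifferentiableAt ℂ g p) :
    euler (fun q => 3 * (q.1 + q.2) * g q) p = (p.1 + p.2) * Mop 3 g p := by
  rw [euler_mul (by fun_prop) hg, euler_three_mul_coord_sum, Mop_apply]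
  ring

theorem euler_sq_sub_mul_add_sq (hf : ContDiff ℂ ⊤ f) :
    euler (fun q => del1 (del1 f) q - del1 (del2 f) q + del2 (del2 f) q) p
      = del1 (del1 (del1 f)) p + del2 (del2 (del2 f)) p := by
  have h11 := hf.del1.del1.differentiable (by simp)
  have h12 := hf.del2.del1.differentiable (by simp)
  have h22 := hf.del2.del2.differentiable (by simp)
  have comm {g} (hg : ContDiff ℂ ⊤ g) := del1_del2_comm (hg.of_le (by simp))
  rw [euler_add (by fun_prop) (h22 p), euler_sub (h11 p) (h12 p)]
  simp only [euler]
  rw [comm hf.del2, comm hf, comm hf.del1]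
  ring

end

/-- The second GKZ operator of `V_{(2,29)}` lies in the left ideal generated by the
Picard-Fuchs operators: applied to any smooth function `f`, it agrees with
`(δ1+δ2)(P2 f) - P1 f`. -/
theorem V229_GKZ_in_PicardFuchs_ideal (f : ℂ × ℂ → ℂ) (hf : ContDiff ℂ ⊤ f) :
    GKZ2op f = fun p => del1 (P2op f) p + del2 (P2op f) p - P1op f p := by
  have smooth_diff {g : ℂ × ℂ → ℂ} (hg : ContDiff ℂ ⊤ g) : Differentiable ℂ g :=
    hg.differentiable (by simp)
  have hθ : Mop 1 (Mop 2 (Mop 3 f)) = Mop 3 (Mop 1 (Mop 2 f)) := by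
    rw [Mop_comm 2 3 (smooth_diff hf) (smooth_diff hf.euler),
      Mop_comm 1 3 (smooth_diff (hf.Mop 2)) (smooth_diff (hf.Mop 2).euler)]
  funext p
  have hP2 : del1 (P2op f) p + del2 (P2op f) p
      = del1 (del1 (del1 f)) p + del2 (del2 (del2 f)) p
        + (p.1 + p.2) * Mop 3 (Mop 1 (Mop 2 f)) p := by
    change euler (fun q => (del1 (del1 f) q - del1 (del2 f) q + del2 (del2 f) q)
      + 3 * (q.1 + q.2) * Mop 1 (Mop 2 f) q) p = _
    have hQ := smooth_diff ((hf.del1.del1.sub hf.del2.del1).add hf.del2.del2)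
    have hh := smooth_diff ((hf.Mop 2).Mop 1)
    rw [euler_add (hQ p) (by fun_prop), euler_sq_sub_mul_add_sq hf,
      euler_three_mul_coord_sum_mul (hh p)]
  rw [hP2]
  simp only [GKZ2op, P1op, hθ]
  ring
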